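/- Let e ≥ 2 and let λ be an e-restricted partition of d. Then the number of standard λ-tableaux T whose residue sequence i^T equals the ladder weight j^λ is exactly ∏_{m=1}^{t_λ} r_m(λ)!. -/

import Mathlib

namespace KN

/-- A subset of `ℤ²_{≥1}` (encoded in `ℕ × ℕ`) shaped like a Young diagram:
all coordinates are `≥ 1` and the set is closed under decreasing either coordinate
(staying `≥ 1`). -/
def IsDiagram (S : Set (ℕ × ℕ)) : Prop :=
  (∀ p ∈ S, 1 ≤ p.1 ∧ 1 ≤ p.2) ∧
  ∀ a b a' b', (a, b) ∈ S → 1 ≤ a' → a' ≤ a → 1 ≤ b' → b' ≤ b → (a', b') ∈ S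

/-- The Young diagram of a partition given as a function `l : ℕ → ℕ`
(`l r` is the `r`-th part, for `r ≥ 1`): the nodes `(a, b)` with `a, b ≥ 1`, `b ≤ l a`. -/
def cells (l : ℕ → ℕ) : Set (ℕ × ℕ) := {p | 1 ≤ p.1 ∧ 1 ≤ p.2 ∧ p.2 ≤ l p.1}

/-- `l` (indexed from `1`) is a weakly decreasing sequence of naturals, eventually zero. -/
def IsPartitionFun (l : ℕ → ℕ) : Prop :=
  (∀ r, 1 ≤ r → l (r + 1) ≤ l r) ∧ ∃ N, ∀ r, N ≤ r → l r = 0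

/-- `l` is a partition of `d`: its Young diagram has exactly `d` nodes. -/
def IsPartitionOf (l : ℕ → ℕ) (d : ℕ) : Prop :=
  IsPartitionFun l ∧ (cells l).Finite ∧ (cells l).ncard = d

/-- `λ_r - λ_{r+1} < e` for all `r ≥ 1`. -/
def IsRestricted (e : ℕ) (l : ℕ → ℕ) : Prop := ∀ r, 1 ≤ r → l r < l (r + 1) + e

/-- The `m`-th ladder `L_m = {(1 + k, m - k(e-1)) : k ≥ 0, k(e-1) < m}`. -/
def ladder (e m : ℕ) : Set (ℕ × ℕ) :=
  {p | ∃ k : ℕ, k * (e - 1) < m ∧ p = (1 + k, m - k * (e - 1))}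

/-- The residue `b - a (mod e)` of a node `(a, b)`. -/
def res (e : ℕ) (p : ℕ × ℕ) : ZMod e := (p.2 : ZMod e) - (p.1 : ZMod e)

/-- `A` is a removable node of the diagram `S`. -/
def Removable (S : Set (ℕ × ℕ)) (A : ℕ × ℕ) : Prop := A ∈ S ∧ IsDiagram (S \ {A})

/-- `B` is an addable node of the diagram `S`. -/
def Addable (S : Set (ℕ × ℕ)) (B : ℕ × ℕ) : Prop := B ∉ S ∧ IsDiagram (S ∪ {B})

/-- `σ_k` of a diagram: the number of nodes in rows `1, …, k`. -/
noncomputable def sigmaSet (S : Set (ℕ × ℕ)) (k : ℕ) : ℕ := (S ∩ {p | p.1 ≤ k}).ncard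

/-- Dominance order on diagrams: `S ⊴ T` iff `σ_k(S) ≤ σ_k(T)` for all `k`. -/
def DomLE (S T : Set (ℕ × ℕ)) : Prop := ∀ k, sigmaSet S k ≤ sigmaSet T k

/-- `R_m = r_1(λ) + ⋯ + r_m(λ)` where `r_u(λ) = |λ ∩ L_u|`. -/
noncomputable def Rlad (e : ℕ) (l : ℕ → ℕ) (m : ℕ) : ℕ :=
  ∑ u ∈ Finset.Icc 1 m, (cells l ∩ ladder e u).ncard

/-- The `s`-th entry of the ladder weight `j^λ`: it equals `m - 1 (mod e)` for the
unique `m` with `R_{m-1} < s ≤ R_m`. -/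
noncomputable def ladderWeight (e : ℕ) (l : ℕ → ℕ) (s : ℕ) : ZMod e :=
  ((sInf {m : ℕ | s ≤ Rlad e l m} - 1 : ℕ) : ZMod e)

/-- A standard tableau of shape `S` (with `|S| = d`): a bijective labelling of the
nodes of `S` by `1, …, d`, increasing along rows and columns. -/
def IsStandardTableau (S : Set (ℕ × ℕ)) (d : ℕ) (T : ℕ × ℕ → ℕ) : Prop :=
  (∀ p ∈ S, 1 ≤ T p ∧ T p ≤ d) ∧
  (∀ p ∈ S, ∀ q ∈ S, T p = T q → p = q) ∧
  (∀ s, 1 ≤ s → s ≤ d → ∃ p ∈ S, T p = s) ∧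
  (∀ a b, (a, b) ∈ S → (a, b + 1) ∈ S → T (a, b) < T (a, b + 1)) ∧
  (∀ a b, (a, b) ∈ S → (a + 1, b) ∈ S → T (a, b) < T (a + 1, b))

/-- The degree `d_A(S)` of a removable node `A` of `S`:
(number of addable nodes of `S` of the same residue strictly below `A`) minus
(number of removable nodes of `S` of the same residue strictly below `A`). -/
noncomputable def degNode (e : ℕ) (S : Set (ℕ × ℕ)) (A : ℕ × ℕ) : ℤ :=
  (({B | Addable S B ∧ res e B = res e A ∧ A.1 < B.1}).ncard : ℤ) -
  (({B | Removable S B ∧ res e B = res e A ∧ A.1 < B.1}).ncard : ℤ)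

/-- The degree of a standard tableau: `deg(T) = Σ_{s=1}^d d_{A_s}(sh(T_{≤ s}))`,
written as a sum over the nodes `p` of `S` (with `s = T p`). -/
noncomputable def degTab (e : ℕ) (S : Set (ℕ × ℕ)) (T : ℕ × ℕ → ℕ) : ℤ :=
  ∑ᶠ p ∈ S, degNode e {q | q ∈ S ∧ T q ≤ T p} p

/-- The set of standard tableaux of shape `S` (of size `d`) whose residue sequence
equals the ladder weight `j^λ` of the partition `l`; tableaux are normalized to
take the value `0` off `S`. -/
def LWTableaux (e d : ℕ) (l : ℕ → ℕ) (S : Set (ℕ × ℕ)) : Set ((ℕ × ℕ) → ℕ) :=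
  {T | IsStandardTableau S d T ∧ (∀ p, p ∉ S → T p = 0) ∧
    ∀ p ∈ S, res e p = ladderWeight e l (T p)}

/-- The quantum integer `[n]_q = q^{n-1} + q^{n-3} + ⋯ + q^{1-n} ∈ ℤ[q, q⁻¹]`. -/
noncomputable def qint (n : ℕ) : LaurentPolynomial ℤ :=
  ∑ k ∈ Finset.range n, LaurentPolynomial.T ((n : ℤ) - 1 - 2 * k)

/-- The quantum factorial `[n]_q! = [n]_q [n-1]_q ⋯ [1]_q`. -/
noncomputable def qfact (n : ℕ) : LaurentPolynomial ℤ :=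
  ∏ k ∈ Finset.Icc 1 n, qint k

/-!
Node `(a, b)` lies on ladder `m = b + (a - 1)(e - 1)` and has residue `m - 1 (mod e)`, while
`j^λ` takes the value `m - 1` exactly on the label block `(R_{m-1}, R_m]`. In a standard tableau
of residue sequence `j^λ`, induction on the label shows that the node labelled `s` lies on the
ladder `m` whose block contains `s`: counting the labels up to `R_{m-1}` puts it on a ladder
`≥ m`, its left or upper neighbour (smaller label, ladder at most `e - 1` lower) puts it on a
ladder `< m + e`, and the residue then forces `m`. Conversely, for `e ≥ 2` the row and column
successors of a node lie on later ladders, so any filling of each ladder by its own block is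
standard. The tableaux are therefore the tuples of bijections from `L_m ∩ λ` to the `m`-th
block, and there are `∏ r_m(λ)!` of them.
-/

def ladderIndex (e : ℕ) (p : ℕ × ℕ) : ℕ := p.2 + (p.1 - 1) * (e - 1)

section Ladders

variable {e : ℕ} {l : ℕ → ℕ}

theorem one_le_ladderIndex {p : ℕ × ℕ} (hp : p ∈ cells l) : 1 ≤ ladderIndex e p := by
  have := hp.2.1
  unfold ladderIndex
  omega

theorem ladderIndex_succ_fst {a : ℕ} (ha : 1 ≤ a) (b : ℕ) :
    ladderIndex e (a + 1, b) = ladderIndex e (a, b) + (e - 1) := by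
  obtain ⟨a, rfl⟩ := Nat.exists_eq_add_of_le' ha
  simp only [ladderIndex, Nat.add_sub_cancel]
  ring

theorem ladderIndex_succ_snd (a b : ℕ) : ladderIndex e (a, b + 1) = ladderIndex e (a, b) + 1 := by
  simp only [ladderIndex]
  ring

theorem cells_inter_ladder (m : ℕ) :
    cells l ∩ ladder e m = {p ∈ cells l | ladderIndex e p = m} := by
  ext ⟨a, b⟩
  simp only [ladder, cells, ladderIndex, Set.mem_inter_iff, Set.mem_ofPred_eq, Prod.mk.injEq]
  constructor
  · rintro ⟨hp, k, hk, rfl, rfl⟩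
    refine ⟨hp, ?_⟩
    rw [Nat.add_sub_cancel_left]
    omega
  · rintro ⟨hp, rfl⟩
    exact ⟨hp, a - 1, by omega, by omega, by omega⟩

theorem res_eq_ladderIndex (he : 1 ≤ e) {p : ℕ × ℕ} (hp : p ∈ cells l) :
    res e p = ((ladderIndex e p - 1 : ℕ) : ZMod e) := by
  obtain ⟨a, b⟩ := p
  obtain ⟨ha, hb, -⟩ := hp
  simp only [res, ladderIndex]
  rw [show b + (a - 1) * (e - 1) - 1 = (a - 1) * (e - 1) + (b - 1) by omega]
  push_cast [ha, hb, he]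
  rw [ZMod.natCast_self]
  ring

theorem Rlad_zero : Rlad e l 0 = 0 := rfl

theorem Rlad_succ (m : ℕ) :
    Rlad e l (m + 1) = Rlad e l m + (cells l ∩ ladder e (m + 1)).ncard :=
  Finset.sum_Icc_succ_top (by omega) _

theorem Rlad_mono : Monotone (Rlad e l) :=
  monotone_nat_of_le_succ fun m => by rw [Rlad_succ]; omega

theorem Rlad_eq_ncard (hfin : (cells l).Finite) (m : ℕ) :
    Rlad e l m = {p ∈ cells l | ladderIndex e p ≤ m}.ncard := by
  induction m with
  | zero =>
    rw [Rlad_zero, eq_comm, Set.ncard_eq_zero (hfin.subset fun p hp => hp.1),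
      Set.eq_empty_iff_forall_notMem]
    exact fun p hp => Nat.not_succ_le_zero 0 ((one_le_ladderIndex hp.1).trans hp.2)
  | succ m ih =>
    have hsplit : {p ∈ cells l | ladderIndex e p ≤ m + 1} =
        {p ∈ cells l | ladderIndex e p ≤ m} ∪ {p ∈ cells l | ladderIndex e p = m + 1} := by
      ext p
      simp only [Set.mem_union, Set.mem_ofPred_eq, ← and_or_left, Nat.le_succ_iff]
    have hdisj : Disjoint {p ∈ cells l | ladderIndex e p ≤ m}
        {p ∈ cells l | ladderIndex e p = m + 1} :=
      Set.disjoint_left.2 fun p hp hp' => by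
        simp only [Set.mem_ofPred_eq] at hp hp'
        omega
    rw [Rlad_succ, ih, cells_inter_ladder, hsplit,
      Set.ncard_union_eq hdisj (hfin.subset fun p hp => hp.1) (hfin.subset fun p hp => hp.1)]

theorem Rlad_le_ncard (hfin : (cells l).Finite) (m : ℕ) : Rlad e l m ≤ (cells l).ncard := by
  rw [Rlad_eq_ncard hfin]
  exact Set.ncard_le_ncard (fun p hp => hp.1) hfin

theorem exists_Rlad_eq_ncard (hfin : (cells l).Finite) : ∃ t, Rlad e l t = (cells l).ncard := by
  refine ⟨hfin.toFinset.sup (ladderIndex e), ?_⟩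
  rw [Rlad_eq_ncard hfin, Set.sep_eq_self_iff_mem_true.2]
  exact fun p hp => Finset.le_sup (hfin.mem_toFinset.2 hp)

end Ladders

noncomputable def ladderBlock (e : ℕ) (l : ℕ → ℕ) (m : ℕ) : Finset ℕ :=
  Finset.Ioc (Rlad e l (m - 1)) (Rlad e l m)

/-- The ladder `m` whose block contains the label `s`, so that `j^λ_s = m - 1`. -/
noncomputable def labelLadder (e : ℕ) (l : ℕ → ℕ) (s : ℕ) : ℕ :=
  sInf {m | s ≤ Rlad e l m}

section LadderBlocks

variable {e : ℕ} {l : ℕ → ℕ}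

theorem card_ladderBlock (m : ℕ) : (ladderBlock e l m).card = (cells l ∩ ladder e m).ncard := by
  rw [ladderBlock, Nat.card_Ioc]
  cases m with
  | zero => simp [ladder]
  | succ m => rw [Rlad_succ, Nat.add_sub_cancel, Nat.add_sub_cancel_left]

open Function in
theorem pairwise_disjoint_ladderBlock : Pairwise (Disjoint on (ladderBlock e l)) := by
  have key : ∀ m m', m < m' → Disjoint (ladderBlock e l m) (ladderBlock e l m') := by
    intro m m' h
    have := Rlad_mono (e := e) (l := l) (Nat.le_sub_one_of_lt h)
    rw [ladderBlock, ladderBlock, Finset.disjoint_left]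
    intro s hs hs'
    simp only [Finset.mem_Ioc] at hs hs'
    omega
  intro m m' h
  rcases h.lt_or_gt with h | h
  exacts [key m m' h, (key m' m h).symm]

theorem ladderWeight_eq_labelLadder (s : ℕ) :
    ladderWeight e l s = ((labelLadder e l s - 1 : ℕ) : ZMod e) := rfl

theorem labelLadder_le {s m : ℕ} (h : s ≤ Rlad e l m) : labelLadder e l s ≤ m :=
  Nat.sInf_le h

theorem le_Rlad_labelLadder {s t : ℕ} (h : s ≤ Rlad e l t) : s ≤ Rlad e l (labelLadder e l s) :=
  Nat.sInf_mem (s := {m | s ≤ Rlad e l m}) ⟨t, h⟩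

theorem one_le_labelLadder {s t : ℕ} (hs : 1 ≤ s) (h : s ≤ Rlad e l t) : 1 ≤ labelLadder e l s := by
  by_contra h0
  have := le_Rlad_labelLadder h
  rw [show labelLadder e l s = 0 by omega, Rlad_zero] at this
  omega

theorem labelLadder_eq_iff {s t m : ℕ} (hs : 1 ≤ s) (h : s ≤ Rlad e l t) :
    labelLadder e l s = m ↔ s ∈ ladderBlock e l m := by
  rw [ladderBlock, Finset.mem_Ioc]
  constructor
  · rintro rfl
    refine ⟨lt_of_not_ge fun h' => ?_, le_Rlad_labelLadder h⟩
    have := labelLadder_le h'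
    have := one_le_labelLadder hs h
    omega
  · rintro ⟨hlt, hle⟩
    refine le_antisymm (labelLadder_le hle) (le_of_not_gt fun h' => ?_)
    have := Rlad_mono (e := e) (l := l) (Nat.le_sub_one_of_lt h')
    have := le_Rlad_labelLadder h
    omega

end LadderBlocks

theorem isDiagram_cells {l : ℕ → ℕ} (hmono : ∀ r, 1 ≤ r → l (r + 1) ≤ l r) :
    IsDiagram (cells l) := by
  refine ⟨fun p hp => ⟨hp.1, hp.2.1⟩, fun a b a' b' hab ha' haa' hb' hbb' => ⟨ha', hb', ?_⟩⟩
  have hanti : ∀ n, a' ≤ n → l n ≤ l a' := fun n hn => by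
    induction n, hn using Nat.le_induction with
    | base => exact le_rfl
    | succ n hn ih => exact (hmono n (ha'.trans hn)).trans ih
  exact hbb'.trans (hab.2.2.trans (hanti a haa'))

namespace IsStandardTableau

variable {S : Set (ℕ × ℕ)} {d : ℕ} {T : ℕ × ℕ → ℕ}

theorem ncard_setOf_le (hT : IsStandardTableau S d T) {k : ℕ} (hk : k ≤ d) :
    {p ∈ S | T p ≤ k}.ncard = k := by
  have himage : T '' {p ∈ S | T p ≤ k} = Set.Icc 1 k := by
    ext s
    constructor
    · rintro ⟨p, ⟨hp, hpk⟩, rfl⟩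
      exact ⟨(hT.1 p hp).1, hpk⟩
    · rintro ⟨hs1, hsk⟩
      obtain ⟨p, hp, rfl⟩ := hT.2.2.1 s hs1 (hsk.trans hk)
      exact ⟨p, ⟨hp, hsk⟩, rfl⟩
  have hinj : Set.InjOn T {p ∈ S | T p ≤ k} := fun p hp q hq => hT.2.1 p hp.1 q hq.1
  rw [← hinj.ncard_image, himage, Set.ncard_Icc_nat, Nat.add_sub_cancel]

theorem exists_lt_ladderIndex_le {e : ℕ} (he : 2 ≤ e) (hS : IsDiagram S)
    (hT : IsStandardTableau S d T) {p : ℕ × ℕ} (hp : p ∈ S) (hp1 : p ≠ (1, 1)) :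
    ∃ q ∈ S, T q < T p ∧ ladderIndex e p ≤ ladderIndex e q + (e - 1) := by
  obtain ⟨a, b⟩ := p
  obtain ⟨ha, hb⟩ := hS.1 _ hp
  by_cases ha2 : 2 ≤ a
  · obtain ⟨a, rfl⟩ := Nat.exists_eq_add_of_le' ha2
    have hq : (a + 1, b) ∈ S := hS.2 _ b _ _ hp (by omega) (by omega) hb le_rfl
    refine ⟨_, hq, hT.2.2.2.2 _ b hq hp, ?_⟩
    rw [ladderIndex_succ_fst (by omega)]
  · obtain rfl : a = 1 := by omega
    have hb1 : b ≠ 1 := fun h => hp1 (by rw [h])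
    obtain ⟨b, rfl⟩ : ∃ c, b = c + 1 + 1 := ⟨b - 2, by omega⟩
    have hq : (1, b + 1) ∈ S := hS.2 1 _ 1 (b + 1) hp le_rfl le_rfl (by omega) (by omega)
    refine ⟨_, hq, hT.2.2.2.1 1 _ hq hp, ?_⟩
    rw [ladderIndex_succ_snd]
    omega

end IsStandardTableau

theorem card_embedding_eq_factorial {α β : Type*} [Finite α] [Finite β]
    (h : Nat.card α = Nat.card β) : Nat.card (α ↪ β) = Nat.factorial (Nat.card α) := by
  have := Fintype.ofFinite α
  have := Fintype.ofFinite β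
  simp only [Nat.card_eq_fintype_card] at h ⊢
  rw [Fintype.card_embedding_eq, h, Nat.descFactorial_self]

open Function in
theorem ncard_injOn_mem_blocks {γ : Type*} {S : Set γ} (hS : S.Finite) {f : γ → ℕ} {t : ℕ}
    (hf : ∀ p ∈ S, f p ∈ Finset.Icc 1 t) {block : ℕ → Finset ℕ}
    (hdisj : Pairwise (Disjoint on block))
    (hcard : ∀ m ∈ Finset.Icc 1 t, (block m).card = {p ∈ S | f p = m}.ncard) :
    {T : γ → ℕ | (∀ p ∉ S, T p = 0) ∧ Set.InjOn T S ∧ ∀ p ∈ S, T p ∈ block (f p)}.ncard =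
      ∏ m ∈ Finset.Icc 1 t, Nat.factorial {p ∈ S | f p = m}.ncard := by
  classical
  set B := {T : γ → ℕ | (∀ p ∉ S, T p = 0) ∧ Set.InjOn T S ∧ ∀ p ∈ S, T p ∈ block (f p)}
  let restrict (T : B) (m : Finset.Icc 1 t) : {p ∈ S | f p = m} ↪ block m :=
    ⟨fun x => ⟨T.1 x, by simpa only [x.2.2] using T.2.2.2 x x.2.1⟩,
      fun x y h => Subtype.ext (T.2.2.1 x.2.1 y.2.1 (congrArg Subtype.val h))⟩
  have hinj : Injective restrict := by
    intro T T' h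
    ext1
    funext p
    by_cases hp : p ∈ S
    · exact congrArg Subtype.val (DFunLike.congr_fun (congrFun h ⟨f p, hf p hp⟩) ⟨p, hp, rfl⟩)
    · rw [T.2.1 p hp, T'.2.1 p hp]
  have hsurj : Surjective restrict := by
    intro g
    let glue (p : γ) : ℕ := if hp : p ∈ S then g ⟨f p, hf p hp⟩ ⟨p, hp, rfl⟩ else 0
    have glue_eq (m : Finset.Icc 1 t) (x : {p ∈ S | f p = m}) : glue x = g m x := by
      obtain ⟨m, hm⟩ := m
      obtain ⟨p, hp, hpm⟩ := x
      dsimp only at hpm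
      subst hpm
      simp [glue, hp]
    have glue_mem (p : γ) (hp : p ∈ S) : glue p ∈ block (f p) := by
      rw [glue_eq ⟨f p, hf p hp⟩ ⟨p, hp, rfl⟩]
      exact (g _ _).2
    refine ⟨⟨glue, fun p hp => dif_neg hp, fun p hp q hq h => ?_, glue_mem⟩, ?_⟩
    · have hfpq : f p = f q := by
        by_contra hne
        exact Finset.disjoint_left.1 (hdisj hne) (glue_mem p hp) (h ▸ glue_mem q hq)
      rw [glue_eq ⟨f p, hf p hp⟩ ⟨p, hp, rfl⟩, glue_eq ⟨f p, hf p hp⟩ ⟨q, hq, hfpq.symm⟩] at h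
      exact congrArg Subtype.val ((g _).injective (Subtype.ext h))
    · funext m
      ext x
      exact glue_eq m x
  rw [← Nat.card_coe_set_eq, Nat.card_congr (Equiv.ofBijective restrict ⟨hinj, hsurj⟩),
    Nat.card_pi,
    ← Finset.prod_coe_sort (Finset.Icc 1 t) fun m => Nat.factorial {p ∈ S | f p = m}.ncard]
  refine Fintype.prod_congr _ _ fun m => ?_
  have : Finite {p ∈ S | f p = m} := hS.subset fun p hp => hp.1
  rw [card_embedding_eq_factorial
    (by rw [Nat.card_coe_set_eq, Nat.card_eq_finsetCard, hcard m m.2]), Nat.card_coe_set_eq]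

section LadderTableaux

variable {e d t : ℕ} {l : ℕ → ℕ} {T : ℕ × ℕ → ℕ}

theorem labelLadder_le_ladderIndex (hfin : (cells l).Finite)
    (hT : IsStandardTableau (cells l) d T) (ht : d ≤ Rlad e l t) {p : ℕ × ℕ} (hp : p ∈ cells l)
    (ih : ∀ q ∈ cells l, T q < T p → ladderIndex e q = labelLadder e l (T q)) :
    labelLadder e l (T p) ≤ ladderIndex e p := by
  set m := labelLadder e l (T p)
  obtain ⟨hp1, hpd⟩ := hT.1 p hp
  have hblock : T p ∈ ladderBlock e l m := (labelLadder_eq_iff hp1 (hpd.trans ht)).1 rfl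
  rw [ladderBlock, Finset.mem_Ioc] at hblock
  have hsub : {q ∈ cells l | T q ≤ Rlad e l (m - 1)} ⊆
      {q ∈ cells l | ladderIndex e q ≤ m - 1} :=
    fun q ⟨hq, hqm⟩ => ⟨hq, (ih q hq (by omega)).symm ▸ labelLadder_le hqm⟩
  -- both sets have `Rlad e l (m - 1)` elements
  have heq := Set.eq_of_subset_of_ncard_le hsub
    (by rw [hT.ncard_setOf_le (by omega), Rlad_eq_ncard hfin]) (hfin.subset fun q hq => hq.1)
  by_contra hlt
  have hp' : p ∈ {q ∈ cells l | ladderIndex e q ≤ m - 1} := ⟨hp, by omega⟩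
  rw [← heq] at hp'
  exact absurd hp'.2 (by omega)

theorem ladderIndex_lt_labelLadder_add (he : 2 ≤ e) (hS : IsDiagram (cells l))
    (hT : IsStandardTableau (cells l) d T) (ht : d ≤ Rlad e l t) {p : ℕ × ℕ} (hp : p ∈ cells l)
    (ih : ∀ q ∈ cells l, T q < T p → ladderIndex e q = labelLadder e l (T q)) :
    ladderIndex e p < labelLadder e l (T p) + e := by
  by_cases hp1 : p = (1, 1)
  · subst hp1
    simp only [ladderIndex]
    omega
  obtain ⟨q, hq, hqp, hpq⟩ := hT.exists_lt_ladderIndex_le he hS hp hp1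
  have : labelLadder e l (T q) ≤ labelLadder e l (T p) :=
    labelLadder_le (hqp.le.trans (le_Rlad_labelLadder ((hT.1 p hp).2.trans ht)))
  rw [ih q hq hqp] at hpq
  omega

theorem ladderIndex_eq_labelLadder (he : 2 ≤ e) (hfin : (cells l).Finite)
    (hS : IsDiagram (cells l)) (hT : IsStandardTableau (cells l) d T) (ht : d ≤ Rlad e l t)
    (hres : ∀ p ∈ cells l, res e p = ladderWeight e l (T p)) {p : ℕ × ℕ} (hp : p ∈ cells l) :
    ladderIndex e p = labelLadder e l (T p) := by
  induction hs : T p using Nat.strong_induction_on generalizing p with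
  | _ s ih =>
  subst hs
  have ih' : ∀ q ∈ cells l, T q < T p → ladderIndex e q = labelLadder e l (T q) :=
    fun q hq hlt => ih _ hlt hq rfl
  have hlow := labelLadder_le_ladderIndex hfin hT ht hp ih'
  have hup := ladderIndex_lt_labelLadder_add he hS hT ht hp ih'
  have hmod : ladderIndex e p - 1 ≡ labelLadder e l (T p) - 1 [MOD e] := by
    rw [← ZMod.natCast_eq_natCast_iff, ← res_eq_ladderIndex (by omega) hp, hres p hp,
      ladderWeight_eq_labelLadder]
  have := one_le_labelLadder (hT.1 p hp).1 ((hT.1 p hp).2.trans ht)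
  have := hmod.eq_of_abs_lt (by rw [abs_sub_lt_iff]; omega)
  omega

theorem lt_of_ladderIndex_lt
    (hblock : ∀ p ∈ cells l, T p ∈ ladderBlock e l (ladderIndex e p)) {p q : ℕ × ℕ}
    (hp : p ∈ cells l) (hq : q ∈ cells l) (h : ladderIndex e p < ladderIndex e q) : T p < T q := by
  have hp' := hblock p hp
  have hq' := hblock q hq
  rw [ladderBlock, Finset.mem_Ioc] at hp' hq'
  have := Rlad_mono (e := e) (l := l) (Nat.le_sub_one_of_lt h)
  omega

theorem isStandardTableau_of_mem_ladderBlock (he : 2 ≤ e) (hfin : (cells l).Finite)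
    (hd : (cells l).ncard = d) (hinj : Set.InjOn T (cells l))
    (hblock : ∀ p ∈ cells l, T p ∈ ladderBlock e l (ladderIndex e p)) :
    IsStandardTableau (cells l) d T := by
  have hbound : ∀ p ∈ cells l, 1 ≤ T p ∧ T p ≤ d := fun p hp => by
    have hp' := hblock p hp
    rw [ladderBlock, Finset.mem_Ioc] at hp'
    have := Rlad_le_ncard (e := e) hfin (ladderIndex e p)
    omega
  have himage : T '' cells l = Set.Icc 1 d :=
    Set.eq_of_subset_of_ncard_le (fun _ ⟨p, hp, hps⟩ => hps ▸ hbound p hp)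
      (by rw [hinj.ncard_image, hd, Set.ncard_Icc_nat, Nat.add_sub_cancel]) (Set.finite_Icc 1 d)
  refine ⟨hbound, hinj, fun s hs1 hsd => ?_, fun a b h h' => ?_, fun a b h h' => ?_⟩
  · obtain ⟨p, hp, hps⟩ : s ∈ T '' cells l := himage ▸ ⟨hs1, hsd⟩
    exact ⟨p, hp, hps⟩
  · exact lt_of_ladderIndex_lt hblock h h' (by rw [ladderIndex_succ_snd]; omega)
  · exact lt_of_ladderIndex_lt hblock h h' (by rw [ladderIndex_succ_fst (a := a) h.1]; omega)

theorem mem_LWTableaux_iff (he : 2 ≤ e) (hl : IsPartitionOf l d) :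
    T ∈ LWTableaux e d l (cells l) ↔ (∀ p ∉ cells l, T p = 0) ∧ Set.InjOn T (cells l) ∧
      ∀ p ∈ cells l, T p ∈ ladderBlock e l (ladderIndex e p) := by
  obtain ⟨⟨hmono, -⟩, hfin, hd⟩ := hl
  obtain ⟨t, ht⟩ := exists_Rlad_eq_ncard (e := e) hfin
  replace ht : d ≤ Rlad e l t := (hd ▸ ht).ge
  constructor
  · rintro ⟨hT, hzero, hres⟩
    refine ⟨hzero, hT.2.1, fun p hp => ?_⟩
    obtain ⟨hp1, hpd⟩ := hT.1 p hp
    exact (labelLadder_eq_iff hp1 (hpd.trans ht)).1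
      (ladderIndex_eq_labelLadder he hfin (isDiagram_cells hmono) hT ht hres hp).symm
  · rintro ⟨hzero, hinj, hblock⟩
    have hT := isStandardTableau_of_mem_ladderBlock he hfin hd hinj hblock
    refine ⟨hT, hzero, fun p hp => ?_⟩
    obtain ⟨hp1, hpd⟩ := hT.1 p hp
    rw [res_eq_ladderIndex (by omega) hp, ladderWeight_eq_labelLadder,
      (labelLadder_eq_iff hp1 (hpd.trans ht)).2 (hblock p hp)]

end LadderTableaux

theorem card_ladder_tableaux_general
    (e d : ℕ) (he : 2 ≤ e) (l : ℕ → ℕ)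
    (hl : IsPartitionOf l d)
    (t : ℕ) (htmax : ∀ u, (cells l ∩ ladder e u).Nonempty → u ≤ t) :
    (LWTableaux e d l (cells l)).ncard =
      ∏ u ∈ Finset.Icc 1 t, Nat.factorial ((cells l ∩ ladder e u).ncard) := by
  have hlad : ∀ p ∈ cells l, ladderIndex e p ∈ Finset.Icc 1 t := fun p hp =>
    Finset.mem_Icc.2 ⟨one_le_ladderIndex hp,
      htmax _ ⟨p, by rw [cells_inter_ladder]; exact ⟨hp, rfl⟩⟩⟩
  simp_rw [Set.ext fun T => mem_LWTableaux_iff he hl, cells_inter_ladder]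
  exact ncard_injOn_mem_blocks hl.2.1 hlad pairwise_disjoint_ladderBlock
    fun m _ => by rw [card_ladderBlock, cells_inter_ladder]

/-- the number of standard `λ`-tableaux with residue sequence `j^λ`
equals `∏_m r_m(λ)!`. -/
theorem card_ladder_tableaux
    (e d : ℕ) (he : 2 ≤ e) (l : ℕ → ℕ)
    (hl : IsPartitionOf l d) (hrestr : IsRestricted e l)
    (t : ℕ) (htmax : ∀ u, (cells l ∩ ladder e u).Nonempty → u ≤ t) :
    (LWTableaux e d l (cells l)).ncard =
      ∏ u ∈ Finset.Icc 1 t, Nat.factorial ((cells l ∩ ladder e u).ncard) :=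
  card_ladder_tableaux_general e d he l hl t htmax

end KN
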